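/- arXiv:2305.08231 — 5 statements merged into one kernel-verified Lean document; each statement's English description precedes it below -/
import Mathlib

section
/- Let P be a small additive category (preadditive with finite biproducts) that is idempotent complete. Then every compact projective object of Rep(P) is isomorphic to a representable presheaf Hom_P(−, S) for some object S of P. -/
/-!
Every additive presheaf `Q` is a quotient of the coproduct of the representables `Hom(-, X)`
indexed by the elements of the groups `Q(X)`. Projectivity splits this epimorphism, and
compactness makes the section factor through a finite subcoproduct; since the additive Yoneda
embedding preserves finite biproducts, that subcoproduct is representable, say by `S₀`. Thus `Q`
is a retract of `Hom(-, S₀)`, the corresponding idempotent of `S₀` splits in `P`, and its image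
represents `Q`.
-/

open CategoryTheory CategoryTheory.Limits Opposite

universe u

/-- The full subcategory of `Pᵒᵖ ⥤ AddCommGrp` spanned by the additive functors. -/
def QRep (P : Type u) [SmallCategory P] [Preadditive P] :=
  ObjectProperty.FullSubcategory (fun F : Pᵒᵖ ⥤ AddCommGrpCat.{u} => F.Additive)

instance (P : Type u) [SmallCategory P] [Preadditive P] : Category (QRep P) :=
  ObjectProperty.FullSubcategory.category _

/-- The representable additive presheaf `Hom_P(-, S)` as an object of `QRep P`. -/
def reprQRep (P : Type u) [SmallCategory P] [Preadditive P] (S : P) : QRep P :=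
  ⟨preadditiveYoneda.obj S, inferInstance⟩

universe w w' v v₂ u₁ u₂

namespace CategoryTheory

section

variable {C : Type u₁} [Category.{v} C]

def Retract.isoOfIdempotentEq {X Y Z : C} (h : Retract X Z) (h' : Retract Y Z)
    (e : h.r ≫ h.i = h'.r ≫ h'.i) : X ≅ Y where
  hom := h.i ≫ h'.r
  inv := h'.i ≫ h.r
  hom_inv_id := by
    rw [Category.assoc, ← Category.assoc h'.r, ← e]
    simp
  inv_hom_id := by
    rw [Category.assoc, ← Category.assoc h.r, e]
    simp

theorem Functor.FullyFaithful.exists_iso_obj_of_retract {D : Type u₂} [Category.{v₂} D]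
    [IsIdempotentComplete C] {F : C ⥤ D} (hF : F.FullyFaithful) {X : D} {Y : C}
    (h : Retract X (F.obj Y)) : ∃ Z, Nonempty (X ≅ F.obj Z) := by
  have hp : hF.preimage (h.r ≫ h.i) ≫ hF.preimage (h.r ≫ h.i) = hF.preimage (h.r ≫ h.i) :=
    hF.map_injective (by simp)
  obtain ⟨Z, i, r, hir, hri⟩ := IsIdempotentComplete.idempotents_split Y _ hp
  refine ⟨Z, ⟨h.isoOfIdempotentEq (Retract.map ⟨i, r, hir⟩ F) ?_⟩⟩
  simp [← F.map_comp, hri]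

namespace Limits

open CoproductsFromFiniteFiltered in
theorem exists_comp_sigmaDesc_eq_of_preservesFilteredColimits [HasFiniteCoproducts C]
    {α : Type w} (f : α → C) [HasCoproduct f] [HasColimitsOfShape (Finset (Discrete α)) C]
    {Q : C} [PreservesFilteredColimitsOfSize.{w, w} (coyoneda.obj (op Q))] (s : Q ⟶ ∐ f) :
    ∃ (S : Finset (Discrete α)) (t : Q ⟶ ∐ fun x : S => f x.1.as),
      t ≫ Sigma.desc (fun x : S => Sigma.ι f x.1.as) = s :=
  Types.jointly_surjective_of_isColimit
    (isColimitOfPreserves (coyoneda.obj (op Q)) (isColimitFiniteSubproductsCocone f)) s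

theorem exists_retract_finiteSubcoproduct_of_epi [HasFiniteCoproducts C]
    {α : Type w} {f : α → C} [HasCoproduct f] [HasColimitsOfShape (Finset (Discrete α)) C]
    {Q : C} [PreservesFilteredColimitsOfSize.{w, w} (coyoneda.obj (op Q))] [Projective Q]
    (π : ∐ f ⟶ Q) [Epi π] :
    ∃ S : Finset (Discrete α), Nonempty (Retract Q (∐ fun x : S => f x.1.as)) := by
  obtain ⟨S, t, ht⟩ := exists_comp_sigmaDesc_eq_of_preservesFilteredColimits f
    (Projective.factorThru (𝟙 Q) π)
  exact ⟨S, ⟨t, Sigma.desc (fun x : S => Sigma.ι f x.1.as) ≫ π, by simp [reassoc_of% ht]⟩⟩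

end Limits

end

section

variable {C : Type u₁} [Category.{v} C] [Preadditive C] {D : Type u₂} [Category.{v₂} D]
  [Preadditive D]

instance Functor.isClosedUnderColimitsOfShape_additive (J : Type w) [Category.{w'} J]
    [HasColimitsOfShape J D] :
    ObjectProperty.IsClosedUnderColimitsOfShape (fun F : C ⥤ D => F.Additive) J where
  colimitsOfShape_le := by
    rintro G ⟨p⟩
    refine ⟨fun {X Y} f g => ?_⟩
    refine (isColimitOfPreserves ((evaluation C D).obj X) p.isColimit).hom_ext fun j => ?_
    have := p.prop_diag_obj j
    have nat (h : X ⟶ Y) := (p.ι.app j).naturality h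
    dsimp at nat ⊢
    rw [← nat, Functor.map_add, Preadditive.add_comp, Preadditive.comp_add, ← nat, ← nat]

theorem Functor.preservesBiproductsOfShape_of_additive (F : C ⥤ D) [F.Additive]
    (J : Type w) [Finite J] : PreservesBiproductsOfShape J F := by
  obtain ⟨n, ⟨e⟩⟩ := Finite.exists_equiv_fin J
  exact ⟨⟨fun {b} hb => ⟨((F.mapBicone b).whiskerIsBilimitIff e.symm).1
    (isBilimitOfPreserves F ((b.whiskerIsBilimitIff e.symm).2 hb))⟩⟩⟩

instance additive_preadditiveYoneda :
    (preadditiveYoneda : C ⥤ Cᵒᵖ ⥤ AddCommGrpCat.{v}).Additive where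
  map_add {_ _ _ _} := by ext; exact Preadditive.comp_add _ _ _ _ _ _

end

end CategoryTheory

namespace QRep

variable {P : Type u} [SmallCategory P] [Preadditive P]

instance (Q : QRep P) : Q.obj.Additive := Q.property

instance (J : Type w) [Category.{w'} J] [HasColimitsOfShape J AddCommGrpCat.{u}] :
    HasColimitsOfShape J (QRep P) :=
  inferInstanceAs (HasColimitsOfShape J (ObjectProperty.FullSubcategory _))

instance : HasFiniteCoproducts (QRep P) := ⟨fun _ => inferInstance⟩

variable (P) in
def reprFunctor : P ⥤ QRep P :=
  ObjectProperty.lift _ preadditiveYoneda fun S => (reprQRep P S).property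

variable (P) in
noncomputable def fullyFaithfulReprFunctor : (reprFunctor P).FullyFaithful :=
  .ofFullyFaithful (ObjectProperty.lift _ preadditiveYoneda _)

def homOfElement (Q : QRep P) {X : P} (x : Q.obj.obj (op X)) : reprQRep P X ⟶ Q :=
  ObjectProperty.homMk
    { app Y := AddCommGrpCat.ofHom
        { toFun (g : Y.unop ⟶ X) := Q.obj.map g.op x
          map_zero' := by
            change Q.obj.map (0 : Y.unop ⟶ X).op x = 0
            simp
          map_add' (g h : Y.unop ⟶ X) := by
            change Q.obj.map (g + h).op x = _
            simp }
      naturality Y Y' g := by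
        ext (h : Y.unop ⟶ X)
        change Q.obj.map (g.unop ≫ h).op x = Q.obj.map g (Q.obj.map h.op x)
        simp }

lemma homOfElement_comp_app_id {Q T : QRep P} {X : P} (x : Q.obj.obj (op X)) (u : Q ⟶ T) :
    (homOfElement Q x ≫ u).hom.app (op X) (𝟙 X) = u.hom.app (op X) x := by
  change u.hom.app (op X) (Q.obj.map (𝟙 (op X)) x) = _
  simp

noncomputable def coverByRepresentables (Q : QRep P) :
    (∐ fun i : Σ X : P, Q.obj.obj (op X) => reprQRep P i.1) ⟶ Q :=
  Limits.Sigma.desc fun i => homOfElement Q i.2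

instance (Q : QRep P) : Epi (coverByRepresentables Q) := by
  refine ⟨fun u v huv => ObjectProperty.hom_ext _ (NatTrans.ext (funext fun X => ?_))⟩
  ext x
  have h : homOfElement Q x ≫ u = homOfElement Q x ≫ v := by
    simpa [coverByRepresentables] using Sigma.ι _ ⟨X.unop, x⟩ ≫= huv
  rw [← homOfElement_comp_app_id x u, h, homOfElement_comp_app_id]

noncomputable def sigmaReprIso [HasFiniteBiproducts P] {J : Type u} [Finite J] (g : J → P) :
    (∐ fun j => reprQRep P (g j)) ≅ reprQRep P (⨁ g) :=
  have := Functor.preservesBiproductsOfShape_of_additive (preadditiveYoneda (C := P)) J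
  have : HasFiniteBiproducts (Pᵒᵖ ⥤ AddCommGrpCat.{u}) := .of_hasFiniteProducts
  (ObjectProperty.fullyFaithfulι _).preimageIso <|
    PreservesCoproduct.iso (ObjectProperty.ι _) _ ≪≫ (biproduct.isoCoproduct _).symm ≪≫
      (preadditiveYoneda.mapBiproduct g).symm

end QRep

theorem stmt2 (P : Type u) [SmallCategory P] [Preadditive P]
    [HasFiniteBiproducts P] [IsIdempotentComplete P] (Q : QRep P)
    (hcompact : Nonempty (PreservesFilteredColimitsOfSize.{u, u}
      (coyoneda.obj (op Q))))
    (hproj : (coyoneda.obj (op Q)).PreservesEpimorphisms) :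
    ∃ S : P, Nonempty (Q ≅ reprQRep P S) := by
  obtain ⟨_⟩ := hcompact
  have : Projective Q := (Projective.projective_iff_preservesEpimorphisms_coyoneda_obj Q).2 hproj
  obtain ⟨S, ⟨h⟩⟩ := exists_retract_finiteSubcoproduct_of_epi (QRep.coverByRepresentables Q)
  exact (QRep.fullyFaithfulReprFunctor P).exists_iso_obj_of_retract
    (h.trans (.ofIso (QRep.sigmaReprIso _)))
end

section
/- Let (f^* : A ⥤ B, g^* : C ⥤ D, h : A ⥤ C, k : B ⥤ D) together with right adjoints f_* of f^* and g_* of g^* and a natural isomorphism α : k ∘ f^* ≅ g^* ∘ h form a horizontally right adjointable square. If an object X of A is h-colocal, then f^* X is k-colocal. -/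
/-!
Transposing along both adjunctions, `k.map : (f^* X ⟶ Y) → (k f^* X ⟶ k Y)` factors as
`(f^* X ⟶ Y) ≃ (X ⟶ f_* Y) →[h] (h X ⟶ h f_* Y) ≃ (h X ⟶ g_* k Y) ≃ (g^* h X ⟶ k Y) ≃ (k f^* X ⟶ k Y)`,
where the third map is composition with the invertible mate and the last is precomposition
with `α`. Every map except `h.map` is a bijection, so `k.map` is one as soon as `h.map` is.
-/

open CategoryTheory

universe v₁ v₂ v₃ v₄ u₁ u₂ u₃ u₄

def Colocal {C : Type u₁} {D : Type u₂} [Category.{v₁} C] [Category.{v₂} D]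
    (F : C ⥤ D) (X : C) : Prop :=
  ∀ Y : C, Function.Bijective (fun f : X ⟶ Y => F.map f)

section Mate

variable {A B C D : Type*} [Category A] [Category B] [Category C] [Category D]
  {fstar : A ⥤ B} {fpush : B ⥤ A} (adjf : fstar ⊣ fpush)
  {gstar : C ⥤ D} {gpush : D ⥤ C} (adjg : gstar ⊣ gpush)
  {h : A ⥤ C} {k : B ⥤ D} (α : fstar ⋙ k ≅ h ⋙ gstar)

theorem homEquiv_inv_app_comp_map {X : A} {Y : B} (u : fstar.obj X ⟶ Y) :
    adjg.homEquiv _ _ (α.inv.app X ≫ k.map u) =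
      h.map (adjf.homEquiv X Y u) ≫ (mateEquiv adjf adjg α.inv).app Y := by
  have hnat : h.map (fpush.map u) ≫ (mateEquiv adjf adjg α.inv).app Y =
      (mateEquiv adjf adjg α.inv).app _ ≫ gpush.map (k.map u) :=
    (mateEquiv adjf adjg α.inv).naturality u
  have hunit := unit_mateEquiv adjf adjg α.inv X
  simp only [Adjunction.homEquiv_unit, Functor.map_comp, Category.assoc, hnat]
  rw [← Category.assoc (h.map _), hunit]
  simp

end Mate

theorem stmt5 {A : Type u₁} {B : Type u₂} {C : Type u₃} {D : Type u₄}
    [Category.{v₁} A] [Category.{v₂} B] [Category.{v₃} C] [Category.{v₄} D]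
    (fstar : A ⥤ B) (fpush : B ⥤ A) (adjf : fstar ⊣ fpush)
    (gstar : C ⥤ D) (gpush : D ⥤ C) (adjg : gstar ⊣ gpush)
    (h : A ⥤ C) (k : B ⥤ D) (α : fstar ⋙ k ≅ h ⋙ gstar)
    (hmate : IsIso (mateEquiv adjf adjg α.inv))
    (X : A) (hX : Colocal h X) :
    Colocal k (fstar.obj X) := by
  intro Y
  have : IsIso ((mateEquiv adjf adjg α.inv).app Y) :=
    NatIso.isIso_app_of_isIso (F := fpush ⋙ h) (G := k ⋙ gpush) _ Y
  let transfer : (h.obj X ⟶ h.obj (fpush.obj Y)) ≃ (k.obj (fstar.obj X) ⟶ k.obj Y) :=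
    (asIso ((mateEquiv adjf adjg α.inv).app Y)).homToEquiv.trans
      ((adjg.homEquiv _ _).symm.trans (α.app X).symm.homFromEquiv)
  have hfactor :
      (fun u : fstar.obj X ⟶ Y => k.map u) = transfer ∘ h.map ∘ adjf.homEquiv X Y := by
    funext u
    simp [transfer, ← homEquiv_inv_app_comp_map]
  rw [hfactor]
  exact transfer.bijective.comp ((hX _).comp (adjf.homEquiv X Y).bijective)
end

section
/- Let (f^* : A ⥤ B, g^* : C ⥤ D, h : A ⥤ C, k : B ⥤ D) together with right adjoints f_* of f^* and g_* of g^* and a natural isomorphism α : k ∘ f^* ≅ g^* ∘ h form a horizontally right adjointable square. If an object Y of B is k-local, then f_* Y is h-local. -/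
/-!
A horizontally right adjointable square consists of adjunctions `f^* ⊣ f_*` and `g^* ⊣ g_*`,
vertical functors `h`, `k`, and a natural isomorphism `α : k ∘ f^* ≅ g^* ∘ h` whose mate
`h ∘ f_* ⟶ g_* ∘ k` (given by `mateEquiv`) is a natural isomorphism.  If `Y` is `k`-local,
then `f_* Y` is `h`-local.
-/

open CategoryTheory

universe v₁ v₂ v₃ v₄ u₁ u₂ u₃ u₄

/-- `X` is `F`-local if `F` induces a bijection `Hom(Z, X) → Hom(F Z, F X)` for all `Z`. -/
def Local {C : Type u₁} {D : Type u₂} [Category.{v₁} C] [Category.{v₂} D]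
    (F : C ⥤ D) (X : C) : Prop :=
  ∀ Z : C, Function.Bijective (fun f : Z ⟶ X => F.map f)

/- The mate `μ : h ∘ f_* ⟶ g_* ∘ k` satisfies `h u ≫ μ_Y = ♯(α⁻¹_Z ≫ k u♭)` for `u : Z ⟶ f_* Y`,
where `♭`, `♯` are the transposes along the two adjunctions. So `h` on `Hom(Z, f_* Y)` is a composite
of bijections: `♭`, then `k` (as `Y` is `k`-local), precomposition with `α⁻¹_Z`, `♯`, and
postcomposition with `μ_Y⁻¹`. -/

section

variable {A : Type u₁} {B : Type u₂} {C : Type u₃} {D : Type u₄}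
  [Category.{v₁} A] [Category.{v₂} B] [Category.{v₃} C] [Category.{v₄} D]
  {L₁ : A ⥤ B} {R₁ : B ⥤ A} {L₂ : C ⥤ D} {R₂ : D ⥤ C} {G : A ⥤ C} {H : B ⥤ D}
  (adj₁ : L₁ ⊣ R₁) (adj₂ : L₂ ⊣ R₂)

theorem map_comp_mateEquiv_app (β : TwoSquare G L₁ L₂ H) {Z : A} {Y : B} (u : Z ⟶ R₁.obj Y) :
    G.map u ≫ (mateEquiv adj₁ adj₂ β).app Y =
      adj₂.homEquiv _ _ (β.app Z ≫ H.map ((adj₁.homEquiv Z Y).symm u)) := by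
  obtain ⟨v, rfl⟩ := (adj₁.homEquiv Z Y).surjective u
  rw [Equiv.symm_apply_apply, adj₁.homEquiv_unit, G.map_comp, Category.assoc,
    ← Functor.comp_map, (mateEquiv adj₁ adj₂ β).naturality, ← Category.assoc, unit_mateEquiv,
    adj₂.homEquiv_unit, Functor.map_comp, Category.assoc]
  rfl

theorem Local.rightAdjoint_obj (α : L₁ ⋙ H ≅ G ⋙ L₂) {Y : B}
    [IsIso ((mateEquiv adj₁ adj₂ α.inv).app Y)] (hY : Local H Y) : Local G (R₁.obj Y) := by
  intro Z
  have hmap : (fun u : Z ⟶ R₁.obj Y => G.map u) =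
      (asIso ((mateEquiv adj₁ adj₂ α.inv).app Y)).homToEquiv.symm ∘ adj₂.homEquiv _ _ ∘
        (α.app Z).homFromEquiv ∘ (fun v => H.map v) ∘ (adj₁.homEquiv Z Y).symm := by
    funext u
    rw [Function.comp_apply, Equiv.eq_symm_apply]
    exact map_comp_mateEquiv_app adj₁ adj₂ α.inv u
  rw [hmap]
  exact (Equiv.bijective _).comp <| (Equiv.bijective _).comp <| (Equiv.bijective _).comp <|
    (hY _).comp (Equiv.bijective _)

end

theorem stmt6 {A : Type u₁} {B : Type u₂} {C : Type u₃} {D : Type u₄}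
    [Category.{v₁} A] [Category.{v₂} B] [Category.{v₃} C] [Category.{v₄} D]
    (fstar : A ⥤ B) (fpush : B ⥤ A) (adjf : fstar ⊣ fpush)
    (gstar : C ⥤ D) (gpush : D ⥤ C) (adjg : gstar ⊣ gpush)
    (h : A ⥤ C) (k : B ⥤ D) (α : fstar ⋙ k ≅ h ⋙ gstar)
    (hmate : IsIso (mateEquiv adjf adjg α.inv))
    (Y : B) (hY : Local k Y) :
    Local h (fpush.obj Y) := by
  have := NatIso.isIso_app_of_isIso (mateEquiv adjf adjg α.inv) Y
  exact hY.rightAdjoint_obj adjf adjg α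
end

section
/- Let F : C ⥤ D be a strong symmetric monoidal functor between symmetric monoidal categories, let X be a dualizable object of C, and let Y be an object of C. If Y is F-colocal, then X ⊗ Y is F-colocal. -/
/-!
Let `F : C ⥤ D` be a strong symmetric monoidal functor between symmetric monoidal categories
(encoded by `[F.Braided]`, which includes a strong monoidal structure compatible with the
braidings/symmetries), let `X` be a dualizable object of `C` (encoded by `[HasRightDual X]`,
i.e. there is `X^∨` with evaluation `X^∨ ⊗ X ⟶ 𝟙` and coevaluation `𝟙 ⟶ X ⊗ X^∨` satisfying
the triangle identities), and let `Y : C`.  If `Y` is `F`-colocal, then `X ⊗ Y` is `F`-colocal.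
-/

open CategoryTheory MonoidalCategory

universe v₁ v₂ u₁ u₂

/-!
A monoidal functor carries an exact pairing `(X, Xᘁ)` to an exact pairing `(F X, F Xᘁ)`, and
the adjunction `Hom(W ⊗ X, Z) ≃ Hom(W, Z ⊗ Xᘁ)` is compatible with `F`. Hence, up to these
bijections, `F` acting on `Hom(W ⊗ X, Z)` is `F` acting on `Hom(W, Z ⊗ Xᘁ)`, so `W ⊗ X` is
colocal when `W` is. The braiding `X ⊗ Y ≅ Y ⊗ X` then gives the theorem.
-/

namespace CategoryTheory.Functor.Monoidal

open LaxMonoidal OplaxMonoidal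

variable {C : Type u₁} {D : Type u₂} [Category.{v₁} C] [Category.{v₂} D]
  [MonoidalCategory C] [MonoidalCategory D] (F : C ⥤ D) [F.Monoidal]

abbrev exactPairing (X Y : C) [ExactPairing X Y] : ExactPairing (F.obj X) (F.obj Y) where
  coevaluation' := ε F ≫ F.map (η_ X Y) ≫ δ F X Y
  evaluation' := μ F Y X ≫ F.map (ε_ X Y) ≫ η F
  coevaluation_evaluation' := by
    -- apply `F` to the triangle identity, then cancel the invertible `μ`, `ε` at both ends
    have h := (F.obj Y ◁ ε F ≫ μ F Y _) ≫=
      F.congr_map (ExactPairing.coevaluation_evaluation X Y) =≫ (δ F _ Y ≫ η F ▷ F.obj Y)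
    simp only [F.map_comp, map_whiskerLeft, map_whiskerRight, map_associator_inv,
      map_rightUnitor, map_leftUnitor_inv, Category.assoc, μ_δ_assoc, whiskerLeft_ε_η_assoc,
      whiskerRight_ε_η, Category.comp_id] at h
    simpa only [MonoidalCategory.whiskerLeft_comp, MonoidalCategory.comp_whiskerRight,
      Category.assoc] using h
  evaluation_coevaluation' := by
    have h := (ε F ▷ F.obj X ≫ μ F _ X) ≫=
      F.congr_map (ExactPairing.evaluation_coevaluation X Y) =≫ (δ F X _ ≫ F.obj X ◁ η F)
    simp only [F.map_comp, map_whiskerLeft, map_whiskerRight, map_associator,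
      map_leftUnitor, map_rightUnitor_inv, Category.assoc, μ_δ_assoc, whiskerRight_ε_η_assoc,
      whiskerLeft_ε_η, Category.comp_id] at h
    simpa only [MonoidalCategory.whiskerLeft_comp, MonoidalCategory.comp_whiskerRight,
      Category.assoc] using h

lemma tensorRightHomEquiv_map (W X Y Z : C) [ExactPairing X Y] (g : W ⊗ X ⟶ Z) :
    letI := exactPairing F X Y
    tensorRightHomEquiv (F.obj W) (F.obj X) (F.obj Y) (F.obj Z) (μ F W X ≫ F.map g) =
      F.map (tensorRightHomEquiv W X Y Z g) ≫ δ F Z Y := by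
  change (ρ_ _).inv ≫ _ ◁ (ε F ≫ F.map (η_ X Y) ≫ δ F X Y) ≫ (α_ _ _ _).inv ≫
    (μ F W X ≫ F.map g) ▷ _ = _
  simp [tensorRightHomEquiv]

end CategoryTheory.Functor.Monoidal

namespace Colocal

open Functor.Monoidal

variable {C : Type u₁} {D : Type u₂} [Category.{v₁} C] [Category.{v₂} D] {F : C ⥤ D}

lemma of_iso {A B : C} (e : A ≅ B) (hA : Colocal F A) : Colocal F B := by
  intro Z
  have h : (F.mapIso e).homFromEquiv.symm ∘ (fun f : B ⟶ Z => F.map f) =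
      (fun f : A ⟶ Z => F.map f) ∘ e.homFromEquiv.symm := by
    ext f
    simp
  rw [← Equiv.comp_bijective _ (F.mapIso e).homFromEquiv.symm, h, Equiv.bijective_comp]
  exact hA Z

variable [MonoidalCategory C] [MonoidalCategory D] [F.Monoidal]

lemma tensor_of_exactPairing {W : C} (hW : Colocal F W) (X X' : C) [ExactPairing X X'] :
    Colocal F (W ⊗ X) := by
  intro Z
  let := exactPairing F X X'
  let e := ((μIso F W X).homFromEquiv (Z := F.obj Z)).symm.trans
    (tensorRightHomEquiv (F.obj W) (F.obj X) (F.obj X') (F.obj Z))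
  have h : e ∘ (fun f : W ⊗ X ⟶ Z => F.map f) = (μIso F Z X').symm.homToEquiv ∘
      (fun g : W ⟶ Z ⊗ X' => F.map g) ∘ tensorRightHomEquiv W X X' Z := by
    ext f
    exact tensorRightHomEquiv_map F W X X' Z f
  rw [← Equiv.comp_bijective _ e, h, Equiv.comp_bijective, Equiv.bijective_comp]
  exact hW _

end Colocal

theorem stmt9 {C : Type u₁} {D : Type u₂} [Category.{v₁} C] [Category.{v₂} D]
    [MonoidalCategory C] [SymmetricCategory C] [MonoidalCategory D] [SymmetricCategory D]
    (F : C ⥤ D) [F.Braided]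
    (X Y : C) [HasRightDual X] (hY : Colocal F Y) :
    Colocal F (X ⊗ Y) :=
  (hY.tensor_of_exactPairing X Xᘁ).of_iso (β_ Y X)
end

section
/- Let F : C ⥤ D be a strong symmetric monoidal functor between symmetric monoidal categories, let X be a dualizable object of C, and let Y be an object of C. If Y is F-local, then X ⊗ Y is F-local. -/
/-!
Let `F : C ⥤ D` be a strong symmetric monoidal functor between symmetric monoidal categories
(encoded by `[F.Braided]`, which includes a strong monoidal structure compatible with the
braidings/symmetries), let `X` be a dualizable object of `C` (encoded by `[HasRightDual X]`,
i.e. there is `X^∨` with evaluation `X^∨ ⊗ X ⟶ 𝟙` and coevaluation `𝟙 ⟶ X ⊗ X^∨` satisfying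
the triangle identities), and let `Y : C`.  If `Y` is `F`-local, then `X ⊗ Y` is `F`-local.
-/

open CategoryTheory MonoidalCategory

universe v₁ v₂ u₁ u₂

open Functor.LaxMonoidal Functor.OplaxMonoidal

section Aux


variable {C : Type u₁} {D : Type u₂} [Category.{v₁} C] [Category.{v₂} D]
    [MonoidalCategory C] [MonoidalCategory D] (F : C ⥤ D) [F.Monoidal]

def mapExactPairing (X Y : C) [ExactPairing X Y] :
    ExactPairing (F.obj X) (F.obj Y) where
  coevaluation' := ε F ≫ F.map (η_ X Y) ≫ δ F X Y
  evaluation' := μ F Y X ≫ F.map (ε_ X Y) ≫ η F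
  coevaluation_evaluation' := by
    have hA : F.obj Y ◁ δ F X Y ≫ (α_ (F.obj Y) (F.obj X) (F.obj Y)).inv =
        μ F Y (X ⊗ Y) ≫ F.map (α_ Y X Y).inv ≫ δ F (Y ⊗ X) Y ≫ δ F Y X ▷ F.obj Y := by
      rw [← Functor.OplaxMonoidal.associativity_inv, Functor.Monoidal.μ_δ_assoc]
    have hC : F.obj Y ◁ ε F ≫ μ F Y (𝟙_ C) = (ρ_ (F.obj Y)).hom ≫ F.map (ρ_ Y).inv := by
      rw [Functor.LaxMonoidal.right_unitality]
      simp [← F.map_comp]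
    have hE : δ F (𝟙_ C) Y ≫ η F ▷ F.obj Y = F.map (λ_ Y).hom ≫ (λ_ (F.obj Y)).inv := by
      rw [Functor.OplaxMonoidal.left_unitality]
      simp [← F.map_comp_assoc]
    simp only [MonoidalCategory.whiskerLeft_comp, comp_whiskerRight, Category.assoc]
    slice_lhs 3 4 => rw [hA]
    slice_lhs 6 7 => rw [Functor.Monoidal.whiskerRight_δ_μ]
    simp only [Category.id_comp, Category.assoc]
    slice_lhs 2 3 => rw [Functor.LaxMonoidal.μ_natural_right]
    slice_lhs 1 2 => rw [hC]
    slice_lhs 5 6 => rw [Functor.OplaxMonoidal.δ_natural_left]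
    slice_lhs 6 7 => rw [hE]
    simp only [Category.assoc, ← F.map_comp_assoc, ← F.map_comp]
    simp [ExactPairing.coevaluation_evaluation_assoc]
  evaluation_coevaluation' := by
    have hA : δ F X Y ▷ F.obj X ≫ (α_ (F.obj X) (F.obj Y) (F.obj X)).hom =
        μ F (X ⊗ Y) X ≫ F.map (α_ X Y X).hom ≫ δ F X (Y ⊗ X) ≫ F.obj X ◁ δ F Y X := by
      rw [← Functor.OplaxMonoidal.associativity]
      rw [Functor.Monoidal.μ_δ_assoc]
    have hC : ε F ▷ F.obj X ≫ μ F (𝟙_ C) X = (λ_ (F.obj X)).hom ≫ F.map (λ_ X).inv := by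
      rw [Functor.LaxMonoidal.left_unitality]
      simp [← F.map_comp]
    have hE : δ F X (𝟙_ C) ≫ F.obj X ◁ η F = F.map (ρ_ X).hom ≫ (ρ_ (F.obj X)).inv := by
      rw [Functor.OplaxMonoidal.right_unitality]
      simp [← F.map_comp_assoc]
    simp only [MonoidalCategory.whiskerLeft_comp, comp_whiskerRight, Category.assoc]
    slice_lhs 3 4 => rw [hA]
    slice_lhs 6 7 => rw [Functor.Monoidal.whiskerLeft_δ_μ]
    simp only [Category.id_comp, Category.assoc]
    slice_lhs 2 3 => rw [Functor.LaxMonoidal.μ_natural_left]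
    slice_lhs 1 2 => rw [hC]
    slice_lhs 5 6 => rw [Functor.OplaxMonoidal.δ_natural_right]
    slice_lhs 6 7 => rw [hE]
    simp only [Category.assoc, ← F.map_comp_assoc, ← F.map_comp]
    simp [ExactPairing.evaluation_coevaluation_assoc]

end Aux


theorem stmt10 {C : Type u₁} {D : Type u₂} [Category.{v₁} C] [Category.{v₂} D]
    [MonoidalCategory C] [SymmetricCategory C] [MonoidalCategory D] [SymmetricCategory D]
    (F : C ⥤ D) [F.Braided]
    (X Y : C) [HasRightDual X] (hY : Local F Y) :
    Local F (X ⊗ Y) := by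
  letI : ExactPairing (F.obj X) (F.obj Xᘁ) := mapExactPairing F X (Xᘁ)
  have key : ∀ (Z : C) (g : (Xᘁ : C) ⊗ Z ⟶ Y),
      F.map ((tensorLeftHomEquiv Z X (Xᘁ) Y) g) ≫ δ F X Y =
        (tensorLeftHomEquiv (F.obj Z) (F.obj X) (F.obj (Xᘁ)) (F.obj Y))
          (μ F (Xᘁ) Z ≫ F.map g) := by
    intro Z g
    have hAssoc : δ F X (Xᘁ) ▷ F.obj Z ≫ (α_ (F.obj X) (F.obj Xᘁ) (F.obj Z)).hom =
        μ F (X ⊗ (Xᘁ : C)) Z ≫ F.map (α_ X (Xᘁ) Z).hom ≫ δ F X ((Xᘁ : C) ⊗ Z) ≫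
          F.obj X ◁ δ F (Xᘁ) Z := by
      rw [← Functor.OplaxMonoidal.associativity, Functor.Monoidal.μ_δ_assoc]
    dsimp only [tensorLeftHomEquiv, Equiv.coe_fn_mk]
    rw [show (η_ (F.obj X) (F.obj Xᘁ)) = ε F ≫ F.map (η_ X (Xᘁ)) ≫ δ F X (Xᘁ) from rfl]
    simp only [comp_whiskerRight, MonoidalCategory.whiskerLeft_comp, Category.assoc, F.map_comp]
    slice_rhs 4 5 => rw [hAssoc]
    slice_rhs 7 8 => rw [Functor.Monoidal.whiskerLeft_δ_μ]
    simp only [Category.id_comp, Category.assoc]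
    slice_rhs 3 4 => rw [Functor.LaxMonoidal.μ_natural_left]
    slice_rhs 1 3 => rw [Functor.LaxMonoidal.left_unitality_inv]
    slice_rhs 4 5 => rw [Functor.OplaxMonoidal.δ_natural_right]
  intro Z
  have heq : (fun f : Z ⟶ X ⊗ Y => F.map f) =
      (fun h => h ≫ μ F X Y) ∘ (tensorLeftHomEquiv (F.obj Z) (F.obj X) (F.obj Xᘁ) (F.obj Y)) ∘
        (fun b => μ F (Xᘁ) Z ≫ b) ∘ (fun g : (Xᘁ : C) ⊗ Z ⟶ Y => F.map g) ∘
        (tensorLeftHomEquiv Z X (Xᘁ) Y).symm := by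
    funext f
    dsimp only [Function.comp]
    rw [← key Z ((tensorLeftHomEquiv Z X (Xᘁ) Y).symm f), Equiv.apply_symm_apply]
    simp
  rw [heq]
  exact (((Functor.Monoidal.μIso F X Y).homToEquiv.bijective.comp
      (tensorLeftHomEquiv (F.obj Z) (F.obj X) (F.obj Xᘁ) (F.obj Y)).bijective).comp
      ((Functor.Monoidal.μIso F (Xᘁ) Z).homFromEquiv.symm.bijective.comp
      ((hY ((Xᘁ : C) ⊗ Z)).comp (tensorLeftHomEquiv Z X (Xᘁ) Y).symm.bijective)))
end
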